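/- Let σ^(1), ..., σ^(t) be vectors in ℝ^k with nonnegative entries, T ≥ 0, and suppose ‖σ^(i)‖₁ < T for all i < t and ‖σ^(t)‖₁ ≥ T. Then the coordinate-wise maximum s^(t) (with s^(t)_j = max_{w ≤ t} σ^(w)_j) satisfies ‖s^(t)‖₁ ≤ ‖σ^(t)‖₁ + (k−1)·T. -/

import Mathlib

/-! Every earlier vector has ‖σ^(w)‖₁ < T, so each of its coordinates is below `T`, and hence
`s^(t)_j ≤ max (σ^(t)_j, T)`. Since `max (a, T) + min (a, T) = a + T`, summing gives
`‖s^(t)‖₁ ≤ ‖σ^(t)‖₁ + k T - ∑ⱼ min (σ^(t)_j, T)`, and the last sum is at least `T`: either some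
coordinate of `σ^(t)` reaches `T`, or none does and the sum is `‖σ^(t)‖₁ ≥ T`. -/

open Finset

noncomputable def norm1 {k : ℕ} (v : Fin k → ℝ) : ℝ := ∑ j, v j

noncomputable def superCand {n k : ℕ} (σ : Fin n → Fin k → ℝ) (t : Fin n) (j : Fin k) : ℝ :=
  (Finset.Iic t).sup' ⟨t, Finset.mem_Iic.2 le_rfl⟩ (fun w => σ w j)

noncomputable def biasedU {n k : ℕ} (lam : ℝ) (σ : Fin n → Fin k → ℝ) (t : Fin n) : ℝ :=
  norm1 (σ t) - lam * (norm1 (fun j => superCand σ t j) - norm1 (σ t))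

theorem Finset.le_sum_min_of_le_sum {ι α : Type*} [AddCommMonoid α] [LinearOrder α]
    [IsOrderedAddMonoid α] {s : Finset ι} {a : ι → α} {T : α} (ha : ∀ i ∈ s, 0 ≤ a i)
    (hT : 0 ≤ T) (hsum : T ≤ ∑ i ∈ s, a i) : T ≤ ∑ i ∈ s, min (a i) T := by
  by_cases h : ∃ j ∈ s, T ≤ a j
  · obtain ⟨j, hj, hTj⟩ := h
    calc T = min (a j) T := (min_eq_right hTj).symm
      _ ≤ ∑ i ∈ s, min (a i) T := single_le_sum (fun i hi => le_min (ha i hi) hT) hj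
  · push Not at h
    calc T ≤ ∑ i ∈ s, a i := hsum
      _ = ∑ i ∈ s, min (a i) T := sum_congr rfl fun i hi => (min_eq_left (h i hi).le).symm

theorem Finset.sum_max_le_sum_add_card_sub_one_mul {ι : Type*} {s : Finset ι} {a : ι → ℝ}
    {T : ℝ} (ha : ∀ i ∈ s, 0 ≤ a i) (hT : 0 ≤ T) (hsum : T ≤ ∑ i ∈ s, a i) :
    ∑ i ∈ s, max (a i) T ≤ ∑ i ∈ s, a i + ((#s : ℝ) - 1) * T := by
  have hmax_add_min : ∑ i ∈ s, max (a i) T + ∑ i ∈ s, min (a i) T = ∑ i ∈ s, a i + #s * T := by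
    rw [← sum_add_distrib]
    simp only [max_add_min, sum_add_distrib, sum_const, nsmul_eq_mul]
  linarith [le_sum_min_of_le_sum ha hT hsum]

theorem le_norm1 {k : ℕ} {v : Fin k → ℝ} (hv : ∀ j, 0 ≤ v j) (j : Fin k) : v j ≤ norm1 v :=
  single_le_sum (fun i _ => hv i) (mem_univ j)

theorem superCand_le_max {n k : ℕ} {σ : Fin n → Fin k → ℝ} {T : ℝ} (hpos : ∀ t j, 0 ≤ σ t j)
    {t : Fin n} (hbefore : ∀ i < t, norm1 (σ i) < T) (j : Fin k) :
    superCand σ t j ≤ max (σ t j) T := by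
  refine sup'_le _ _ fun w hw => ?_
  rcases (mem_Iic.1 hw).eq_or_lt with rfl | hwt
  · exact le_max_left _ _
  · exact ((le_norm1 (hpos w) j).trans (hbefore w hwt).le).trans (le_max_right _ _)

theorem stmt4 (n k : ℕ) (T : ℝ) (hT : 0 ≤ T)
    (σ : Fin n → Fin k → ℝ) (hpos : ∀ t j, 0 ≤ σ t j)
    (t : Fin n) (hbefore : ∀ i : Fin n, i < t → norm1 (σ i) < T)
    (hat : T ≤ norm1 (σ t)) :
    norm1 (fun j => superCand σ t j) ≤ norm1 (σ t) + ((k : ℝ) - 1) * T := by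
  calc norm1 (fun j => superCand σ t j) ≤ ∑ j, max (σ t j) T :=
        sum_le_sum fun j _ => superCand_le_max hpos hbefore j
    _ ≤ norm1 (σ t) + ((k : ℝ) - 1) * T := by
        simpa [norm1] using sum_max_le_sum_add_card_sub_one_mul (fun j _ => hpos t j) hT hat
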